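/- arXiv:0706.3462 — 3 statements merged into one kernel-verified Lean document; each statement's English description precedes it below -/
import Mathlib

section
/- Let n, ℓ, ℓ', ς be natural numbers with n ≥ 1, ℓ ≥ 1, ℓ' ≥ 1, and set a = ℓ·ℓ'/(ℓ+ℓ') ∈ ℚ. If ∑_{m=0}^{ς} C(n+m−1, m)·(a − m) ≤ 0, then ς·(ℓ+ℓ')·n ≥ ℓ·ℓ'·(n+1). Moreover, ∑_{m=0}^{ς} C(n+m−1, m)·(a − m) = 0 if and only if ς·(ℓ+ℓ')·n = ℓ·ℓ'·(n+1). -/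
/-! Multiplied by `n + 1`, the sum has the closed form `C(n+ς, ς) · ((n+1)a − nς)`, by induction
on `ς` using Pascal's rule and `(k+1) C(n+k, k+1) = n C(n+k, k)`. For `a = ℓℓ'/(ℓ+ℓ')` the sum is
therefore a positive multiple of `ℓℓ'(n+1) − ς(ℓ+ℓ')n`, and both claims are read off from the sign
of that difference. -/

theorem mul_sum_range_choose_mul_sub {R : Type*} [CommRing R] (n ς : ℕ) (a : R) :
    (n + 1) * ∑ m ∈ Finset.range (ς + 1), ((n + m - 1).choose m : R) * (a - m) =
      ((n + ς).choose ς : R) * ((n + 1) * a - n * ς) := by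
  induction ς with
  | zero => simp
  | succ k ih =>
    have pascal : ((n + k + 1).choose (k + 1) : R) = (n + k).choose k + (n + k).choose (k + 1) := by
      rw [Nat.choose_succ_succ', Nat.cast_add]
    have absorb : ((n + k).choose (k + 1) : R) * (k + 1) = (n + k).choose k * n := by
      have h := congrArg (Nat.cast : ℕ → R) (Nat.choose_succ_right_eq (n + k) k)
      rw [Nat.add_sub_cancel] at h
      push_cast at h
      exact h
    rw [Finset.sum_range_succ, mul_add, ih, ← add_assoc, Nat.add_sub_cancel, pascal]
    push_cast
    linear_combination -absorb

theorem exists_pos_mul_sum_range_choose_mul_sub (n ℓ ℓ' ς : ℕ) (hℓ : 0 < ℓ + ℓ') :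
    ∃ c : ℚ, 0 < c ∧
      ∑ m ∈ Finset.range (ς + 1), ((n + m - 1).choose m : ℚ) * ((ℓ * ℓ' : ℚ) / (ℓ + ℓ') - m) =
        c * ((ℓ * ℓ' * (n + 1) : ℕ) - (ς * (ℓ + ℓ') * n : ℕ)) := by
  have hℓℚ : (0 : ℚ) < ℓ + ℓ' := by exact_mod_cast hℓ
  have hC : (0 : ℚ) < (n + ς).choose ς := by exact_mod_cast Nat.choose_pos (Nat.le_add_left ς n)
  refine ⟨(n + ς).choose ς / ((n + 1) * (ℓ + ℓ')), by positivity, ?_⟩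
  rw [← mul_right_inj' (by positivity : (n + 1 : ℚ) ≠ 0), mul_sum_range_choose_mul_sub]
  push_cast
  field_simp

theorem stmt_3_general (n ℓ ℓ' ς : ℕ) (hℓ : 1 ≤ ℓ)
    (a : ℚ) (ha : a = (ℓ * ℓ' : ℚ) / (ℓ + ℓ')) :
    ((∑ m ∈ Finset.range (ς + 1), ((n + m - 1).choose m : ℚ) * (a - m)) ≤ 0 →
      ℓ * ℓ' * (n + 1) ≤ ς * (ℓ + ℓ') * n) ∧
    ((∑ m ∈ Finset.range (ς + 1), ((n + m - 1).choose m : ℚ) * (a - m)) = 0 ↔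
      ς * (ℓ + ℓ') * n = ℓ * ℓ' * (n + 1)) := by
  obtain ⟨c, hc, hsum⟩ := exists_pos_mul_sum_range_choose_mul_sub n ℓ ℓ' ς (by omega)
  rw [ha, hsum]
  constructor
  · intro h
    exact_mod_cast sub_nonpos.mp (nonpos_of_mul_nonpos_right h hc)
  · rw [mul_eq_zero, or_iff_right hc.ne', sub_eq_zero, eq_comm]
    exact_mod_cast Iff.rfl

theorem stmt_3 (n ℓ ℓ' ς : ℕ) (hn : 1 ≤ n) (hℓ : 1 ≤ ℓ) (hℓ' : 1 ≤ ℓ')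
    (a : ℚ) (ha : a = (ℓ * ℓ' : ℚ) / (ℓ + ℓ')) :
    ((∑ m ∈ Finset.range (ς + 1), ((n + m - 1).choose m : ℚ) * (a - m)) ≤ 0 →
      ℓ * ℓ' * (n + 1) ≤ ς * (ℓ + ℓ') * n) ∧
    ((∑ m ∈ Finset.range (ς + 1), ((n + m - 1).choose m : ℚ) * (a - m)) = 0 ↔
      ς * (ℓ + ℓ') * n = ℓ * ℓ' * (n + 1)) :=
  stmt_3_general n ℓ ℓ' ς hℓ a ha
end

section
/- Let n, ℓ', ς be natural numbers with n ≥ 3, ℓ' ≥ 3 and 1 ≤ ς ≤ 3. Assume that ς·(3+ℓ')·n = 3·ℓ'·(n+1) and that n·(n+1) ≤ 3·ℓ'·(ℓ'−1). Then either ς = 3 and ℓ' = 3·n, or ς = 2, n = 3 and ℓ' = 3. In particular ς = 1 is impossible, and the solutions (ℓ', n) = (4, 6) and (ℓ', n) = (5, 15) of the first equation with ς = 2 are excluded by the second inequality. -/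
theorem stmt_5 (n ℓ' ς : ℕ) (hn : 3 ≤ n) (hℓ' : 3 ≤ ℓ') (hς1 : 1 ≤ ς) (hς3 : ς ≤ 3)
    (h1 : ς * (3 + ℓ') * n = 3 * ℓ' * (n + 1))
    (h2 : n * (n + 1) ≤ 3 * ℓ' * (ℓ' - 1)) :
    (ς = 3 ∧ ℓ' = 3 * n) ∨ (ς = 2 ∧ n = 3 ∧ ℓ' = 3) := by
  interval_cases ς
  · exfalso; nlinarith
  · -- ς = 2 : ℓ'*(n+3) = 6n, so ℓ' < 6
    have hl5 : ℓ' < 6 := by nlinarith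
    interval_cases ℓ'
    · right
      have : n = 3 := by nlinarith
      exact ⟨rfl, this, rfl⟩
    · have : n = 6 := by nlinarith
      subst this; omega
    · have : n = 15 := by nlinarith
      subst this; omega
  · left
    refine ⟨rfl, ?_⟩
    nlinarith
end

section
/- For every natural number n ≥ 3, the ℝ-linear span of the set of special orthogonal matrices {A ∈ M_n(ℝ) : Aᵀ·A = 1 and det A = 1} is all of the matrix algebra M_n(ℝ). -/
/-!
The span of a submonoid of matrices is the subalgebra it generates, so it suffices to produce
every matrix unit `E i j` inside the algebra generated by `SO(n)`. The product of the two
reflections `1 - 2 E i i` and `1 - 2 E j j` lies in `SO(n)` and equals `1 - 2 (E i i + E j j)`;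
with a third index `k`, `(E i i + E j j) (E i i + E k k) = E i i`, which is where `n ≥ 3` enters.
Finally `E i i * A * E j j = A i j • E i j`, and a transposition matrix times a reflection is an
element `A` of `SO(n)` with `A i j = 1`.
-/

theorem Submonoid.span_eq_toSubmodule_adjoin {R A : Type*} [CommSemiring R] [Semiring A]
    [Algebra R A] (S : Submonoid A) :
    Submodule.span R (S : Set A) = Subalgebra.toSubmodule (Algebra.adjoin R (S : Set A)) := by
  rw [Algebra.adjoin_eq_span, S.closure_eq]

theorem Fintype.exists_ne_ne_of_three_le_card {α : Type*} [Fintype α] (h : 3 ≤ card α)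
    (a b : α) : ∃ c, c ≠ a ∧ c ≠ b :=
  Cardinal.exists_ne_ne_of_three_le (by simpa using h) a b

namespace Matrix

variable {n R : Type*} [Fintype n] [DecidableEq n] [CommRing R]

theorem single_mem_of_apply_eq_one {S : Subalgebra R (Matrix n n R)}
    (hS : ∀ k, single k k 1 ∈ S) {A : Matrix n n R} (hA : A ∈ S) {i j : n} (hij : A i j = 1) :
    single i j 1 ∈ S := by
  simpa [hij] using mul_mem (mul_mem (hS i) hA) (hS j)

theorem subalgebra_eq_top_of_single_mem {S : Subalgebra R (Matrix n n R)}
    (hS : ∀ i j, single i j 1 ∈ S) : S = ⊤ := by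
  refine eq_top_iff.2 fun A _ => A.induction_on' S.zero_mem (fun _ _ => S.add_mem) fun i j c => ?_
  simpa using S.smul_mem (hS i j) c

theorem coe_specialOrthogonalGroup :
    (specialOrthogonalGroup n R : Set (Matrix n n R)) = {A | Aᵀ * A = 1 ∧ A.det = 1} :=
  Set.ext fun _ => and_congr_left' (mem_orthogonalGroup_iff' n R)

theorem mul_mem_specialOrthogonalGroup_of_det_eq_neg_one {A B : Matrix n n R}
    (hA : A ∈ orthogonalGroup n R) (hB : B ∈ orthogonalGroup n R) (hdetA : A.det = -1)
    (hdetB : B.det = -1) : A * B ∈ specialOrthogonalGroup n R :=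
  ⟨mul_mem hA hB, by simp [hdetA, hdetB]⟩

theorem permMatrix_mem_orthogonalGroup (σ : Equiv.Perm n) :
    σ.permMatrix R ∈ orthogonalGroup n R := by
  rw [mem_orthogonalGroup_iff', transpose_permMatrix, ← permMatrix_mul, mul_inv_cancel,
    permMatrix_one]

omit [Fintype n] in
theorem diagonal_update_one_neg_one (i : n) :
    diagonal (Function.update 1 i (-1)) = 1 - single i i (2 : R) := by
  ext a b
  rcases eq_or_ne a b with rfl | hab
  · rcases eq_or_ne a i with rfl | hai
    · norm_num
    · simp [hai, single_apply_of_row_ne (Ne.symm hai)]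
  · rcases eq_or_ne i a with rfl | hia
    · simp [hab]
    · simp [hab, hia]

theorem one_sub_single_two_mem_orthogonalGroup (i : n) :
    1 - single i i (2 : R) ∈ orthogonalGroup n R := by
  rw [← diagonal_update_one_neg_one, mem_orthogonalGroup_iff', diagonal_transpose,
    diagonal_mul_diagonal, ← diagonal_one]
  congr 1
  ext k
  rcases eq_or_ne k i with rfl | hk <;> simp [*]

theorem det_one_sub_single_two (i : n) : (1 - single i i (2 : R)).det = -1 := by
  rw [← diagonal_update_one_neg_one, det_diagonal, Finset.prod_update_of_mem (Finset.mem_univ i)]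
  simp

theorem one_sub_mul_one_sub_single_two_of_ne {i j : n} (hij : i ≠ j) :
    1 - (1 - single i i (2 : R)) * (1 - single j j 2) = single i i 2 + single j j 2 := by
  rw [sub_mul, one_mul, mul_sub, mul_one, single_mul_single_of_ne (h := hij)]
  abel

theorem exists_mem_specialOrthogonalGroup_apply_eq_one {i j : n} (hij : i ≠ j) :
    ∃ A ∈ specialOrthogonalGroup n R, A i j = 1 := by
  refine ⟨(Equiv.swap i j).permMatrix R * (1 - single i i 2),
    mul_mem_specialOrthogonalGroup_of_det_eq_neg_one (permMatrix_mem_orthogonalGroup _)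
      (one_sub_single_two_mem_orthogonalGroup i) ?_ (det_one_sub_single_two i), ?_⟩
  · simp [det_permutation, Equiv.Perm.sign_swap hij]
  · simp [mul_sub, Ne.symm hij]

variable [Invertible (2 : R)]

theorem single_add_single_mem_adjoin_specialOrthogonalGroup {i j : n} (hij : i ≠ j) :
    single i i (1 : R) + single j j 1 ∈ Algebra.adjoin R (specialOrthogonalGroup n R : Set _) := by
  have hmem : (1 - single i i (2 : R)) * (1 - single j j 2) ∈ specialOrthogonalGroup n R :=
    mul_mem_specialOrthogonalGroup_of_det_eq_neg_one (one_sub_single_two_mem_orthogonalGroup i)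
      (one_sub_single_two_mem_orthogonalGroup j) (det_one_sub_single_two i)
      (det_one_sub_single_two j)
  have := Subalgebra.smul_mem _ (sub_mem (one_mem _) (Algebra.subset_adjoin hmem)) (⅟2 : R)
  rwa [one_sub_mul_one_sub_single_two_of_ne hij, smul_add, smul_single, smul_single,
    smul_eq_mul, invOf_mul_self] at this

theorem single_mem_adjoin_specialOrthogonalGroup (h : 3 ≤ Fintype.card n) (i : n) :
    single i i (1 : R) ∈ Algebra.adjoin R (specialOrthogonalGroup n R : Set _) := by
  obtain ⟨j, hji, -⟩ := Fintype.exists_ne_ne_of_three_le_card h i i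
  obtain ⟨k, hki, hkj⟩ := Fintype.exists_ne_ne_of_three_le_card h i j
  have hprod : (single i i (1 : R) + single j j 1) * (single i i 1 + single k k 1) =
      single i i 1 := by
    simp [add_mul, mul_add, hji, hki.symm, hkj.symm]
  rw [← hprod]
  exact mul_mem (single_add_single_mem_adjoin_specialOrthogonalGroup hji.symm)
    (single_add_single_mem_adjoin_specialOrthogonalGroup hki.symm)

theorem adjoin_specialOrthogonalGroup_eq_top (h : 3 ≤ Fintype.card n) :
    Algebra.adjoin R (specialOrthogonalGroup n R : Set (Matrix n n R)) = ⊤ := by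
  refine subalgebra_eq_top_of_single_mem fun i j => ?_
  have hdiag := single_mem_adjoin_specialOrthogonalGroup (R := R) h
  rcases eq_or_ne i j with rfl | hij
  · exact hdiag i
  · obtain ⟨A, hA, hAij⟩ := exists_mem_specialOrthogonalGroup_apply_eq_one (R := R) hij
    exact single_mem_of_apply_eq_one hdiag (Algebra.subset_adjoin hA) hAij

theorem span_specialOrthogonalGroup_eq_top (h : 3 ≤ Fintype.card n) :
    Submodule.span R (specialOrthogonalGroup n R : Set (Matrix n n R)) = ⊤ := by
  rw [Submonoid.span_eq_toSubmodule_adjoin, adjoin_specialOrthogonalGroup_eq_top h,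
    Algebra.top_toSubmodule]

end Matrix

theorem stmt_6 (n : ℕ) (hn : 3 ≤ n) :
    Submodule.span ℝ
      {A : Matrix (Fin n) (Fin n) ℝ | A.transpose * A = 1 ∧ A.det = 1} = ⊤ := by
  rw [← Matrix.coe_specialOrthogonalGroup]
  exact Matrix.span_specialOrthogonalGroup_eq_top (by simpa using hn)
end
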